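/- arXiv:2401.05872 — 4 statements merged into one kernel-verified Lean document; each statement's English description precedes it below -/
import Mathlib

section
/- In a distributive category (in particular, any extensive category with finite products), every coproduct injection inl : X → X + Y is a monomorphism. -/
/-!
Let `d : (X ⨯ X) ⨿ (X ⨯ Y) ⟶ X ⨯ (X ⨿ Y)` be the distributivity isomorphism. Since
`coprod.inl ≫ d = prod.map (𝟙 X) coprod.inl` and the injection `X ⨯ X ⟶ (X ⨯ X) ⨿ (X ⨯ Y)` is split
(there is a morphism `X ⨯ Y ⟶ X ⨯ X`), the morphism `prod.map (𝟙 X) coprod.inl` is mono. Pairing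
with the identity then cancels the factor `X`: if `f ≫ inl = g ≫ inl`, then
`prod.lift f f ≫ prod.map (𝟙 X) inl = prod.lift f g ≫ prod.map (𝟙 X) inl`, so `f = g`.
-/

open CategoryTheory CategoryTheory.Limits

namespace CategoryTheory.Limits

variable {C : Type*} [Category C]

lemma isSplitMono_coprod_inl_of_hom {A B : C} [HasBinaryCoproduct A B] (r : B ⟶ A) :
    IsSplitMono (coprod.inl : A ⟶ A ⨿ B) :=
  IsSplitMono.mk' { retraction := coprod.desc (𝟙 A) r, id := coprod.inl_desc _ _ }

lemma mono_of_mono_prod_map_id {A B : C} [HasBinaryProduct A A] [HasBinaryProduct A B]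
    (h : A ⟶ B) [Mono (prod.map (𝟙 A) h)] : Mono h where
  right_cancellation f g hfg := by
    have hpair : prod.lift f f = prod.lift f g := by
      rw [← cancel_mono (prod.map (𝟙 A) h)]
      simp [hfg]
    simpa only [prod.lift_snd] using hpair =≫ prod.snd

end CategoryTheory.Limits

/-- In a distributive category (the canonical morphism
`X×Y + X×Z → X×(Y+Z)` is an isomorphism for all `X, Y, Z`), every coproduct injection
`inl : X → X + Y` is a monomorphism. -/
theorem coprod_inl_mono_of_distributive {C : Type*} [Category C] [HasFiniteProducts C]
    [HasFiniteCoproducts C]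
    (hdist : ∀ X Y Z : C,
      IsIso (coprod.desc (prod.map (𝟙 X) coprod.inl) (prod.map (𝟙 X) coprod.inr) :
        (X ⨯ Y) ⨿ (X ⨯ Z) ⟶ X ⨯ (Y ⨿ Z)))
    (X Y : C) : Mono (coprod.inl : X ⟶ X ⨿ Y) := by
  have := hdist X X Y
  have := isSplitMono_coprod_inl_of_hom (A := X ⨯ X) (B := X ⨯ Y) (prod.lift prod.fst prod.fst)
  have : Mono (prod.map (𝟙 X) (coprod.inl : X ⟶ X ⨿ Y)) := by
    rw [← coprod.inl_desc (prod.map (𝟙 X) coprod.inl) (prod.map (𝟙 X) coprod.inr)]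
    infer_instance
  exact mono_of_mono_prod_map_id coprod.inl
end

section
/- Suppose C is countably extensive with pullback-stable strong epimorphisms (and has (strong epi, mono) factorizations). Then for every morphism f : X → Y, the inverse-image map f⁻¹[−] : Pred_Y(C) → Pred_X(C) preserves countable joins of subobjects. -/
open CategoryTheory CategoryTheory.Limits

universe v u

variable {C : Type u} [Category.{v} C]

/-- The canonical functor `∏ₙ C/Xₙ ⥤ C/∐ₙ Xₙ` taking countable coproducts of morphisms;
`C` is countably extensive if this is an equivalence for every countable family. -/
noncomputable def countExtFunctor [HasCountableCoproducts C] (X : ℕ → C) :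
    (∀ n : ℕ, Over (X n)) ⥤ Over (∐ X) where
  obj p := Over.mk (Limits.Sigma.map fun n => (p n).hom)
  map {p q} f := Over.homMk (Limits.Sigma.map fun n => (f n).left) (by dsimp; apply Limits.Sigma.hom_ext; intro n; simp)

/-- The `SupSet` structure on subobjects, with the universe of well-poweredness pinned to `v`
(as `WellPowered C` meant in the original library). -/
noncomputable instance subobjectSupSetOfWellPowered [WellPowered.{v} C] [HasCoproducts.{v} C]
    [HasImages C] {B : C} : SupSet (Subobject B) :=
  (Subobject.completeSemilatticeSup.{v} (B := B)).toSupSet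

/-!
The join `⨆ n, P n` is the image of `∐ₙ Pₙ ⟶ Y`. Pulling this factorisation back along `f`,
the strong epi onto the image stays a strong epi, so the pulled-back join is the image of
`(∐ₙ Pₙ) ×_Y X ⟶ X`; by countable extensivity that pullback splits as a coproduct of objects
over the `Pₙ`, the `n`-th of which maps into `f⁻¹[Pₙ]`.
-/

variable (C) in
def StrongEpiPullbackStable : Prop :=
  ∀ {P X Y Z : C} (fst : P ⟶ X) (snd : P ⟶ Y) (f : X ⟶ Z) (g : Y ⟶ Z),
    IsPullback fst snd f g → StrongEpi g → StrongEpi fst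

theorem exists_iso_sigmaMap_of_essSurj [HasCountableCoproducts C] {E : ℕ → C}
    [(countExtFunctor E).EssSurj] {Z : C} (h : Z ⟶ ∐ E) :
    ∃ (p : ∀ n, Over (E n)) (φ : (∐ fun n => (p n).left) ≅ Z),
      φ.hom ≫ h = Limits.Sigma.map fun n => (p n).hom := by
  let φ := (countExtFunctor E).objObjPreimageIso (Over.mk h)
  exact ⟨_, (Over.forget _).mapIso φ, Over.w φ.hom⟩

namespace CategoryTheory.Subobject

section iSup

variable [WellPowered.{v} C] [HasCoproducts.{v} C] [HasImages C] {Y : C} {ι : Type*}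

theorem le_iSup (P : ι → Subobject Y) (i : ι) : P i ≤ ⨆ i, P i :=
  le_sSup _ _ ⟨i, rfl⟩

theorem iSup_le {P : ι → Subobject Y} {M : Subobject Y} (h : ∀ i, P i ≤ M) :
    ⨆ i, P i ≤ M :=
  sSup_le _ _ (Set.forall_mem_range.2 h)

theorem iSup_eq_mk_image_sigmaDesc (P : ι → Subobject Y) [HasCoproduct fun i => (P i : C)] :
    ⨆ i, P i = mk (image.ι (Limits.Sigma.desc fun i => (P i).arrow)) := by
  apply le_antisymm
  · exact iSup_le fun i =>
      le_mk_of_comm (Limits.Sigma.ι (fun i => (P i : C)) i ≫ factorThruImage _) (by simp)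
  · exact mk_le_of_comm (image.lift ⟨_, (⨆ i, P i).arrow,
      Limits.Sigma.desc fun i => ofLE _ _ (le_iSup P i), by ext; simp⟩) (image.lift_fac _)

end iSup

theorem factors_sigmaDesc {ι : Type*} {E : ι → C} [HasCoproduct E] {Y : C} {M : Subobject Y}
    {t : ∀ i, E i ⟶ Y} (h : ∀ i, M.Factors (t i)) : M.Factors (Limits.Sigma.desc t) := by
  have : Limits.Sigma.desc t =
      Limits.Sigma.desc (fun i => M.factorThru (t i) (h i)) ≫ M.arrow := by
    ext; simp
  rw [this]
  exact factors_comp_arrow _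

theorem mk_le_of_factors_strongEpi_comp {Z W X : C} {k : Z ⟶ W} [StrongEpi k] {m : W ⟶ X}
    [Mono m] {M : Subobject X} (h : M.Factors (k ≫ m)) : mk m ≤ M :=
  let sq : CommSq (M.factorThru _ h) k M.arrow m := ⟨by simp⟩
  mk_le_of_comm sq.lift sq.fac_right

section Pullback

variable [HasPullbacks C]

theorem factors_pullback_of_comp_eq {W X Y : C} {f : X ⟶ Y} {P : Subobject Y}
    {t : W ⟶ X} {a : W ⟶ P} (h : t ≫ f = a ≫ P.arrow) : ((pullback f).obj P).Factors t := by
  rw [pullback_obj]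
  exact ⟨pullback.lift a t h.symm, pullback.lift_snd _ _ _⟩

theorem pullback_mk_le_of_factors (hstab : StrongEpiPullbackStable C)
    {W I X Y : C} {g : W ⟶ Y} {e : W ⟶ I} [StrongEpi e] {m : I ⟶ Y} [Mono m] (w : e ≫ m = g)
    (f : X ⟶ Y) {M : Subobject X} (hM : M.Factors (Limits.pullback.snd g f)) :
    (pullback f).obj (mk m) ≤ M := by
  subst w
  let k : Limits.pullback (e ≫ m) f ⟶ Limits.pullback m f :=
    pullback.lift (pullback.fst _ f ≫ e) (pullback.snd _ f) (by simp [pullback.condition])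
  have hk : IsPullback k (pullback.fst _ f) (pullback.fst m f) e :=
    IsPullback.of_right
      (by rw [pullback.lift_snd]; exact (IsPullback.of_hasPullback (e ≫ m) f).flip)
      (pullback.lift_fst _ _ _) (IsPullback.of_hasPullback m f).flip
  have := hstab _ _ _ _ hk inferInstance
  rw [pullback_obj_mk (IsPullback.of_hasPullback m f)]
  exact mk_le_of_factors_strongEpi_comp (k := k) (by rwa [pullback.lift_snd])

theorem iSup_pullback_factors_pullback_snd_sigmaDesc [WellPowered.{v} C] [HasCoproducts.{v} C]
    [HasImages C] [HasCountableCoproducts C] {X Y : C} (f : X ⟶ Y) (P : ℕ → Subobject Y)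
    [(countExtFunctor fun n => (P n : C)).EssSurj] :
    (⨆ n, (pullback f).obj (P n)).Factors
      (Limits.pullback.snd (Limits.Sigma.desc fun n => (P n).arrow) f) := by
  obtain ⟨p, φ, hφ⟩ :=
    exists_iso_sigmaMap_of_essSurj (pullback.fst (Limits.Sigma.desc fun n => (P n).arrow) f)
  rw [← φ.inv_hom_id_assoc (pullback.snd _ f)]
  refine factors_of_factors_right _ ?_
  have hdesc : φ.hom ≫ pullback.snd _ f =
      Limits.Sigma.desc fun n => Limits.Sigma.ι _ n ≫ φ.hom ≫ pullback.snd _ f := by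
    ext; simp
  rw [hdesc]
  refine factors_sigmaDesc fun n => factors_of_le _ (le_iSup _ n) ?_
  refine factors_pullback_of_comp_eq (a := (p n).hom) ?_
  simp [← pullback.condition, reassoc_of% hφ]

end Pullback

end CategoryTheory.Subobject

/-- If `C` is countably extensive with pullback-stable strong epimorphisms, then inverse
image along any morphism preserves countable joins of subobjects. -/
theorem pullback_preserves_countable_joins
    [WellPowered.{v} C] [HasPullbacks C] [HasCoproducts.{v} C] [HasCountableCoproducts C]
    [HasStrongEpiMonoFactorisations C]
    (hext : ∀ X : ℕ → C, (countExtFunctor X).IsEquivalence)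
    (hstab : ∀ {P X Y Z : C} (fst : P ⟶ X) (snd : P ⟶ Y) (f : X ⟶ Z) (g : Y ⟶ Z),
      IsPullback fst snd f g → StrongEpi g → StrongEpi fst)
    {X Y : C} (f : X ⟶ Y) (P : ℕ → Subobject Y) :
    (Subobject.pullback f).obj (⨆ n, P n) = ⨆ n, (Subobject.pullback f).obj (P n) := by
  have := hext fun n => (P n : C)
  refine le_antisymm ?_
    (Subobject.iSup_le fun n => (Subobject.pullback f).monotone (Subobject.le_iSup P n))
  rw [Subobject.iSup_eq_mk_image_sigmaDesc]
  exact Subobject.pullback_mk_le_of_factors hstab (image.fac _) f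
    (Subobject.iSup_pullback_factors_pullback_snd_sigmaDesc f P)
end

section
/- If an endofunctor Σ on a complete well-powered category C (with (strong epi, mono) factorizations) preserves strong epimorphisms and generates a free monad Σ*, then the canonical predicate lifting of the free monad equals the free monad of the canonical predicate lifting: (Σ̄)* = (Σ*)̄, where the canonical predicate lifting of a functor F sends a subobject p : P ↪ X to the image of F p : F P → F X. -/
open CategoryTheory CategoryTheory.Limits

/-- If `Σ` preserves strong epimorphisms and generates a free monad `Σ*` (given by free
`Σ`-algebras `ι_X : Σ(Σ*X) → Σ*X` with universal maps `η_X : X → Σ*X`), then the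
canonical predicate lifting of `Σ*` is the free monad of the canonical predicate lifting
`Σ̄` of `Σ`: for every predicate (mono) `p : P ↪ X`, the canonical lifting of `Σ*` at `p`
(the image of `Σ*p`), equipped with the restrictions of `η_X` and `ι_X`, is the free
`Σ̄`-algebra on `p` in the category of predicates.  Morphisms of predicates are pairs of
morphisms of `C` forming a commuting square; `Σ̄` sends a mono `q` to the image of `Σ q`. -/
theorem free_monad_of_canonical_lifting {C : Type*} [Category C]
    [HasStrongEpiMonoFactorisations C]
    (Sg Sgstar : C ⥤ C) (η : 𝟭 C ⟶ Sgstar) (ι : Sgstar ⋙ Sg ⟶ Sgstar)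
    (hfree : ∀ (X A : C) (a : Sg.obj A ⟶ A) (h : X ⟶ A),
      ∃! f : Sgstar.obj X ⟶ A, η.app X ≫ f = h ∧ ι.app X ≫ f = Sg.map f ≫ a)
    (hpres : ∀ {A B : C} (e : A ⟶ B), StrongEpi e → StrongEpi (Sg.map e))
    {P X : C} (p : P ⟶ X) [Mono p] :
    ∃ (ηbar : P ⟶ image (Sgstar.map p))
      (ιbar : image (Sg.map (image.ι (Sgstar.map p))) ⟶ image (Sgstar.map p)),
      -- the lifted unit and structure are carried by `η_X` and `ι_X`:
      ηbar ≫ image.ι (Sgstar.map p) = p ≫ η.app X ∧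
      ιbar ≫ image.ι (Sgstar.map p) = image.ι (Sg.map (image.ι (Sgstar.map p))) ≫ ι.app X ∧
      -- universal property of the free `Σ̄`-algebra on `p : P ↪ X`:
      ∀ (A Q : C) (q : Q ⟶ A), Mono q →
        ∀ (a : Sg.obj A ⟶ A) (abar : image (Sg.map q) ⟶ Q),
          abar ≫ q = image.ι (Sg.map q) ≫ a →
          ∀ (h : X ⟶ A) (hbar : P ⟶ Q), hbar ≫ q = p ≫ h →
            ∃! fp : (Sgstar.obj X ⟶ A) × (image (Sgstar.map p) ⟶ Q),
              (η.app X ≫ fp.1 = h ∧ ι.app X ≫ fp.1 = Sg.map fp.1 ≫ a) ∧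
              fp.2 ≫ q = image.ι (Sgstar.map p) ≫ fp.1 ∧
              ηbar ≫ fp.2 = hbar := by
  -- Notation
  set m := image.ι (Sgstar.map p) with hm
  set e := factorThruImage (Sgstar.map p) with he
  have hem : e ≫ m = Sgstar.map p := image.fac _
  -- the unit
  refine ⟨η.app P ≫ e, ?_⟩
  have hηbar : (η.app P ≫ e) ≫ m = p ≫ η.app X := by
    rw [Category.assoc, hem]
    simpa using (η.naturality p).symm
  -- the structure map: lift through a strong epi
  haveI : StrongEpi (Sg.map e) := hpres e inferInstance
  have sqι : CommSq (ι.app P ≫ e) (Sg.map e ≫ factorThruImage (Sg.map m)) m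
      (image.ι (Sg.map m) ≫ ι.app X) := by
    constructor
    have : Sg.map e ≫ Sg.map m ≫ ι.app X = ι.app P ≫ e ≫ m := by
      rw [hem, ← Sg.map_comp_assoc, hem]
      simpa using ι.naturality p
    simpa [image.fac_assoc] using this.symm
  refine ⟨sqι.lift, hηbar, sqι.fac_right, ?_⟩
  -- universal property
  intro A Q q hq a abar habar h hbar hhbar
  obtain ⟨f, ⟨hf1, hf2⟩, hfu⟩ := hfree X A a h
  -- Q is a Σ-algebra
  obtain ⟨g, ⟨hg1, hg2⟩, _⟩ := hfree P Q (factorThruImage (Sg.map q) ≫ abar) hbar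
  -- g ≫ q = Σ*p ≫ f by uniqueness
  obtain ⟨k, _, hku⟩ := hfree P A a (p ≫ h)
  have hgq : g ≫ q = Sgstar.map p ≫ f := by
    have h1 : g ≫ q = k := hku _ ⟨by rw [← Category.assoc, hg1, hhbar],
      by rw [← Category.assoc, hg2, Category.assoc, Category.assoc, habar,
        image.fac_assoc, ← Sg.map_comp_assoc]⟩
    have h2 : Sgstar.map p ≫ f = k := hku _ ⟨by
        rw [← Category.assoc, ← η.naturality p, Functor.id_map, Category.assoc, hf1], by
        rw [← Category.assoc, ← ι.naturality p, Functor.comp_map, Category.assoc, hf2,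
          ← Sg.map_comp_assoc]⟩
    rw [h1, h2]
  -- lift to get fbar
  have sqf : CommSq g e q (m ≫ f) := ⟨by rw [hgq, ← Category.assoc, hem]⟩
  refine ⟨⟨f, sqf.lift⟩, ⟨⟨hf1, hf2⟩, sqf.fac_right, by
    rw [Category.assoc, sqf.fac_left, hg1]⟩, ?_⟩
  rintro ⟨f', fbar'⟩ ⟨hf', hc', -⟩
  have : f' = f := hfu _ hf'
  subst this
  ext : 1
  · rfl
  · have : fbar' ≫ q = sqf.lift ≫ q := by rw [hc', sqf.fac_right]
    exact (cancel_mono q).mp this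
end

section
/- The simply typed SKI calculus (xTCL) is strongly normalizing under call-by-name semantics: for every closed well-typed term t, there is a finite sequence of unlabelled reduction steps t = t₀ → t₁ → ⋯ → tₙ such that tₙ is a value (i.e., tₙ is of type unit with tₙ ⇓✓, or tₙ : τ₁→τ₂ has a labelled transition tₙ →^s for each argument s : τ₁). -/
/-- Simple types of xTCL. -/
inductive Ty : Type
  | unit : Ty
  | arrow : Ty → Ty → Ty

open Ty

/-- Closed well-typed terms of the extended typed combinatory logic xTCL. -/
inductive Tm : Ty → Type
  | e : Tm unit
  | S (a b c : Ty) : Tm (arrow (arrow a (arrow b c)) (arrow (arrow a b) (arrow a c)))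
  | S' (a b c : Ty) : Tm (arrow a (arrow b c)) → Tm (arrow (arrow a b) (arrow a c))
  | S'' (a b c : Ty) : Tm (arrow a (arrow b c)) → Tm (arrow a b) → Tm (arrow a c)
  | K (a b : Ty) : Tm (arrow a (arrow b a))
  | K' (a b : Ty) : Tm a → Tm (arrow b a)
  | I (a : Ty) : Tm (arrow a a)
  | app {a b : Ty} : Tm (arrow a b) → Tm a → Tm b

/-- Labelled transitions `t →^s t'`: the function term `t` applied to argument `s`
evolves to `t'`. -/
inductive LStep : ∀ {a b : Ty}, Tm (arrow a b) → Tm a → Tm b → Prop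
  | S {a b c : Ty} (t : Tm (arrow a (arrow b c))) :
      LStep (Tm.S a b c) t (Tm.S' a b c t)
  | S' {a b c : Ty} (p : Tm (arrow a (arrow b c))) (t : Tm (arrow a b)) :
      LStep (Tm.S' a b c p) t (Tm.S'' a b c p t)
  | S'' {a b c : Ty} (p : Tm (arrow a (arrow b c))) (q : Tm (arrow a b)) (t : Tm a) :
      LStep (Tm.S'' a b c p q) t (Tm.app (Tm.app p t) (Tm.app q t))
  | K {a b : Ty} (t : Tm a) : LStep (Tm.K a b) t (Tm.K' a b t)
  | K' {a b : Ty} (p : Tm a) (t : Tm b) : LStep (Tm.K' a b p) t p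
  | I {a : Ty} (t : Tm a) : LStep (Tm.I a) t t

/-- Unlabelled reduction `t → t'` (call-by-name). -/
inductive Step : ∀ {a : Ty}, Tm a → Tm a → Prop
  | appL {a b : Ty} {p p' : Tm (arrow a b)} {q : Tm a} :
      Step p p' → Step (Tm.app p q) (Tm.app p' q)
  | appβ {a b : Ty} {p : Tm (arrow a b)} {q : Tm a} {p' : Tm b} :
      LStep p q p' → Step (Tm.app p q) p'

/-- Values: the term `e : unit` explicitly terminates (`✓`), and a term of arrow type is
a value if it has a labelled transition for each appropriately typed argument. -/
inductive IsValue : ∀ {a : Ty}, Tm a → Prop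
  | unit : IsValue Tm.e
  | fn {a b : Ty} (t : Tm (arrow a b)) :
      (∀ s : Tm a, ∃ t', LStep t s t') → IsValue t


/-- Logical relation (reducibility). -/
def Red : ∀ a : Ty, Tm a → Prop
  | Ty.unit, t => ∃ t', Relation.ReflTransGen Step t t' ∧ IsValue t'
  | Ty.arrow a b, t =>
      (∃ t', Relation.ReflTransGen Step t t' ∧ IsValue t') ∧
      ∀ s : Tm a, Red a s → Red b (Tm.app t s)

lemma red_norm : ∀ {a : Ty} {t : Tm a}, Red a t →
    ∃ t' : Tm a, Relation.ReflTransGen Step t t' ∧ IsValue t' := by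
  intro a t h
  cases a with
  | unit => exact h
  | arrow a b => exact h.1

lemma red_expand : ∀ {a : Ty} {t t' : Tm a}, Step t t' → Red a t' → Red a t := by
  intro a
  induction a with
  | unit =>
      rintro t t' hs ⟨u, hu, hv⟩
      exact ⟨u, Relation.ReflTransGen.head hs hu, hv⟩
  | arrow a b iha ihb =>
      rintro t t' hs ⟨⟨u, hu, hv⟩, hf⟩
      exact ⟨⟨u, Relation.ReflTransGen.head hs hu, hv⟩,
        fun s hs' => ihb (Step.appL hs) (hf s hs')⟩

lemma red_of_lstep {a b : Ty} (t : Tm (arrow a b)) (f : Tm a → Tm b)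
    (hl : ∀ s, LStep t s (f s)) (hr : ∀ s, Red a s → Red b (f s)) :
    Red (arrow a b) t :=
  ⟨⟨t, Relation.ReflTransGen.refl, IsValue.fn t (fun s => ⟨f s, hl s⟩)⟩,
    fun s hs => red_expand (Step.appβ (hl s)) (hr s hs)⟩

lemma red_all : ∀ {a : Ty} (t : Tm a), Red a t := by
  intro a t
  induction t with
  | e => exact ⟨Tm.e, Relation.ReflTransGen.refl, IsValue.unit⟩
  | S a b c =>
      refine red_of_lstep _ _ (fun s => LStep.S s) (fun p hp => ?_)
      refine red_of_lstep _ _ (fun s => LStep.S' p s) (fun q hq => ?_)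
      refine red_of_lstep _ _ (fun s => LStep.S'' p q s) (fun r hr => ?_)
      exact (hp.2 r hr).2 _ (hq.2 r hr)
  | S' a b c p ihp =>
      refine red_of_lstep _ _ (fun s => LStep.S' p s) (fun q hq => ?_)
      refine red_of_lstep _ _ (fun s => LStep.S'' p q s) (fun r hr => ?_)
      exact (ihp.2 r hr).2 _ (hq.2 r hr)
  | S'' a b c p q ihp ihq =>
      refine red_of_lstep _ _ (fun s => LStep.S'' p q s) (fun r hr => ?_)
      exact (ihp.2 r hr).2 _ (ihq.2 r hr)
  | K a b =>
      refine red_of_lstep _ _ (fun s => LStep.K s) (fun p hp => ?_)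
      exact red_of_lstep _ _ (fun s => LStep.K' p s) (fun _ _ => hp)
  | K' a b p ihp =>
      exact red_of_lstep _ _ (fun s => LStep.K' p s) (fun _ _ => ihp)
  | I a =>
      exact red_of_lstep _ _ (fun s => LStep.I s) (fun s hs => hs)
  | app p q ihp ihq =>
      exact ihp.2 q ihq

/-- Strong normalization of xTCL under call-by-name semantics: every closed well-typed
term reduces in finitely many steps to a value. -/
theorem xTCL_strong_normalization {a : Ty} (t : Tm a) :
    ∃ t' : Tm a, Relation.ReflTransGen Step t t' ∧ IsValue t' := by
  exact red_norm (red_all t)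
end
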